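/- K × K is contained in ψ(K): for every pair (k₀, k₁) ∈ K × K there exists g ∈ K ∩ St_Γ(1) with ψ(g) = (k₀, k₁). -/

import Mathlib

set_option maxHeartbeats 1000000

attribute [local instance] Classical.propDecidable

noncomputable section

namespace Grig

/-! ### The Grigorchuk group -/

/-- The action of the generator `a` on vertices (finite binary words). -/
def aFun : List Bool → List Bool
  | [] => []
  | x :: w => (!x) :: w

lemma aFun_invol : ∀ w, aFun (aFun w) = w := by
  intro w; cases w <;> simp [aFun]

/-- States of the automaton generating `b`, `c`, `d`. -/
inductive St | B | C | D

/-- The actions of `b`, `c`, `d` on vertices. -/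
def stFun : St → List Bool → List Bool
  | _, [] => []
  | .B, false :: w => false :: aFun w
  | .B, true :: w => true :: stFun .C w
  | .C, false :: w => false :: aFun w
  | .C, true :: w => true :: stFun .D w
  | .D, false :: w => false :: w
  | .D, true :: w => true :: stFun .B w

lemma stFun_invol : ∀ (s : St) (w : List Bool), stFun s (stFun s w) = w := by
  intro s w
  induction w generalizing s with
  | nil => cases s <;> rfl
  | cons x w ih => cases s <;> cases x <;> simp [stFun, aFun_invol, ih]

/-- The automorphism `a` of the binary rooted tree. -/
def a : Equiv.Perm (List Bool) := ⟨aFun, aFun, aFun_invol, aFun_invol⟩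
/-- The automorphism `b`. -/
def b : Equiv.Perm (List Bool) := ⟨stFun .B, stFun .B, stFun_invol .B, stFun_invol .B⟩
/-- The automorphism `c`. -/
def c : Equiv.Perm (List Bool) := ⟨stFun .C, stFun .C, stFun_invol .C, stFun_invol .C⟩
/-- The automorphism `d`. -/
def d : Equiv.Perm (List Bool) := ⟨stFun .D, stFun .D, stFun_invol .D, stFun_invol .D⟩

/-- The Grigorchuk group `Γ`, as the subgroup of the group of permutations of the
vertex set generated by the four automorphisms `a, b, c, d` (which indeed preserve word
length and initial segments, so `Γ` is a subgroup of `Aut(T)`). -/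
def Grigorchuk : Subgroup (Equiv.Perm (List Bool)) := Subgroup.closure {a, b, c, d}

/-- `a` as an element of `Γ`. -/
def ga : Grigorchuk := ⟨a, Subgroup.subset_closure (by simp)⟩
/-- `b` as an element of `Γ`. -/
def gb : Grigorchuk := ⟨b, Subgroup.subset_closure (by simp)⟩
/-- `c` as an element of `Γ`. -/
def gc : Grigorchuk := ⟨c, Subgroup.subset_closure (by simp)⟩
/-- `d` as an element of `Γ`. -/
def gd : Grigorchuk := ⟨d, Subgroup.subset_closure (by simp)⟩

/-- The first level stabilizer `St_Γ(1)` of `Γ`. -/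
def St1 : Subgroup Grigorchuk where
  carrier := {g | (g : Equiv.Perm (List Bool)) [false] = [false] ∧
                  (g : Equiv.Perm (List Bool)) [true] = [true]}
  one_mem' := ⟨rfl, rfl⟩
  mul_mem' := by
    rintro g h ⟨hg1, hg2⟩ ⟨hh1, hh2⟩
    refine ⟨?_, ?_⟩ <;>
      simp only [Subgroup.coe_mul, Equiv.Perm.mul_apply, hh1, hh2, hg1, hg2]
  inv_mem' := by
    rintro g ⟨hg1, hg2⟩
    refine ⟨?_, ?_⟩
    · conv_lhs => rw [← hg1]
      simp
    · conv_lhs => rw [← hg2]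
      simp

/-- The subgroup `K`, the normal closure of `abab` in `Γ`. -/
def K : Subgroup Grigorchuk := Subgroup.normalClosure {ga * gb * ga * gb}

instance : K.Normal := Subgroup.normalClosure_normal

/-- The canonical projection `π_K : Γ → Γ/K`. -/
def piK : Grigorchuk →* Grigorchuk ⧸ K := QuotientGroup.mk' K

/-- `ψ_i(g)` (`i ∈ {0,1}`, encoded by `false`/`true`): the automorphism determined by
`g(i·w) = i·ψ_i(g)(w)`, when it exists in `Γ` (it does for `g ∈ St_Γ(1)`);
junk value `1` otherwise. -/
def psiG (i : Bool) (g : Grigorchuk) : Grigorchuk :=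
  if h : ∃ k : Grigorchuk, ∀ w : List Bool,
      (g : Equiv.Perm (List Bool)) (i :: w) = i :: (k : Equiv.Perm (List Bool)) w
  then h.choose else 1

/-- `ū`: the closest element of `St_Γ(1)`. -/
def bar (g : Grigorchuk) : Grigorchuk := if g ∈ St1 then g else g * ga

/-- The word length of `g ∈ Γ` with respect to the generating set `{a,b,c,d}`
(each generator is an involution, so inverses of generators are not needed). -/
def wlen (g : Grigorchuk) : ℕ :=
  sInf {n | ∃ l : List Grigorchuk, l.length = n ∧
    (∀ x ∈ l, x ∈ ({ga, gb, gc, gd} : Set Grigorchuk)) ∧ l.prod = g}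



/-! ### Words and equations over a group -/

/-- A letter: a constant from `G`, or a variable `x ∈ ℕ` with a sign
(`true` for `x`, `false` for `x⁻¹`). -/
abbrev Letter (G : Type*) := G ⊕ (ℕ × Bool)

/-- A word over `G` with variables: `W = u₁u₂⋯u_k`, `u_i ∈ G ∪ X^{±1}`. -/
abbrev Word (G : Type*) := List (Letter G)

variable {G : Type*} [Group G]

/-- The constant letter. -/
def Cst (g : G) : Letter G := Sum.inl g
/-- The letter `x`. -/
def Vp {G : Type*} (x : ℕ) : Letter G := Sum.inr (x, true)
/-- The letter `x⁻¹`. -/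
def Vm {G : Type*} (x : ℕ) : Letter G := Sum.inr (x, false)

/-- The element of the free product `G ∗ F_X` represented by a word. -/
def wordProd (W : Word G) : Monoid.Coprod G (FreeGroup ℕ) :=
  (W.map (fun u => match u with
    | Sum.inl g => Monoid.Coprod.inl g
    | Sum.inr (x, e) =>
        Monoid.Coprod.inr (if e then FreeGroup.of x else (FreeGroup.of x)⁻¹))).prod

/-- Number of occurrences of the letter `x^ε` (`ε` given by `e`) in `W`. -/
def occ (W : Word G) (x : ℕ) (e : Bool) : ℕ :=
  W.countP (fun u => match u with
    | Sum.inr (y, f) => y == x && f == e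
    | _ => false)

/-- Total number of occurrences of the variable `x` in `W` (occurrences of both
`x` and `x⁻¹` are counted). -/
def nocc (W : Word G) (x : ℕ) : ℕ := occ W x true + occ W x false

/-- `Var(W)`: the set of variables occurring in `W`. -/
def Vars (W : Word G) : Set ℕ := {x | nocc W x ≠ 0}

/-- A word is quadratic if every variable occurring in it occurs exactly twice. -/
def IsQuadratic (W : Word G) : Prop := ∀ x ∈ Vars W, nocc W x = 2

/-- A word is orientable if every variable occurring in it occurs exactly once with
exponent `+1` and once with exponent `-1`. -/
def Orientable (W : Word G) : Prop := ∀ x ∈ Vars W, occ W x true = 1 ∧ occ W x false = 1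

/-- Formal inverse of a word. -/
def wordInv (W : Word G) : Word G :=
  (W.map (fun u => match u with
    | Sum.inl g => Sum.inl g⁻¹
    | Sum.inr (x, e) => (Sum.inr (x, !e) : Letter G))).reverse

/-- The commutator word `[x,y] = x⁻¹y⁻¹xy`. -/
def comm {G : Type*} (x y : ℕ) : Word G := [Vm x, Vm y, Vp x, Vp y]
/-- The square word `x² = x·x`. -/
def sq {G : Type*} (x : ℕ) : Word G := [Vp x, Vp x]
/-- The coefficient factor `z⁻¹cz`. -/
def cf (z : ℕ) (c : G) : Word G := [Vm z, Cst c, Vp z]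

/-- Concatenation of a list of words. -/
def listJoin {α : Type*} (l : List (List α)) : List α := l.foldr (· ++ ·) []

/-- The commutator part `[x₁,y₁]⋯[x_g,y_g]`. -/
def commPart {G : Type*} (g : ℕ) (xs ys : Fin g → ℕ) : Word G :=
  listJoin (List.ofFn fun i => comm (xs i) (ys i))
/-- The square part `x₁²⋯x_g²`. -/
def sqPart {G : Type*} (g : ℕ) (xs : Fin g → ℕ) : Word G :=
  listJoin (List.ofFn fun i => sq (xs i))
/-- The coefficient part `z₁⁻¹c₁z₁⋯z_m⁻¹c_mz_m`. -/
def coefPart (m : ℕ) (zs : Fin m → ℕ) (cs : Fin m → G) : Word G :=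
  listJoin (List.ofFn fun i => cf (zs i) (cs i))

/-- The standard orientable quadratic word
`[x₁,y₁]⋯[x_g,y_g]·z₁⁻¹c₁z₁⋯z_m⁻¹c_mz_m`. -/
def stdOr (g m : ℕ) (xs ys : Fin g → ℕ) (zs : Fin m → ℕ) (cs : Fin m → G) : Word G :=
  commPart g xs ys ++ coefPart m zs cs

/-- The standard non-orientable quadratic word
`x₁²⋯x_g²·z₁⁻¹c₁z₁⋯z_m⁻¹c_mz_m`. -/
def stdNonOr (g m : ℕ) (xs : Fin g → ℕ) (zs : Fin m → ℕ) (cs : Fin m → G) : Word G :=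
  sqPart g xs ++ coefPart m zs cs

/-- The variables `x₁,…,x_g,y₁,…,y_g,z₁,…,z_m` are pairwise distinct. -/
def DistinctVars (g m : ℕ) (xs ys : Fin g → ℕ) (zs : Fin m → ℕ) : Prop :=
  Function.Injective (fun p : (Fin g ⊕ Fin g) ⊕ Fin m =>
    match p with
    | Sum.inl (Sum.inl i) => xs i
    | Sum.inl (Sum.inr i) => ys i
    | Sum.inr i => zs i)

/-- The variables `x₁,…,x_g,z₁,…,z_m` are pairwise distinct. -/
def DistinctVarsN (g m : ℕ) (xs : Fin g → ℕ) (zs : Fin m → ℕ) : Prop :=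
  Function.Injective (fun p : Fin g ⊕ Fin m =>
    match p with
    | Sum.inl i => xs i
    | Sum.inr i => zs i)

/-- `α : G ∗ F_X → G` is a `G`-homomorphism (identical on `G`). -/
def IsGHom (α : Monoid.Coprod G (FreeGroup ℕ) →* G) : Prop :=
  ∀ g : G, α (Monoid.Coprod.inl g) = g

/-- The value of a homomorphism at a variable. -/
def xval (α : Monoid.Coprod G (FreeGroup ℕ) →* G) (x : ℕ) : G :=
  α (Monoid.Coprod.inr (FreeGroup.of x))

/-- The equation `W = 1` has a solution in `G`. -/
def Solvable (W : Word G) : Prop :=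
  ∃ α : Monoid.Coprod G (FreeGroup ℕ) →* G, IsGHom α ∧ α (wordProd W) = 1

/-- The system of equations `{W = 1 | W ∈ Ws}` with constraint `γ` modulo `H`
has a solution in `G`. -/
def SolvableC (H : Subgroup G) [H.Normal] (Ws : List (Word G)) (γ : ℕ → G ⧸ H) : Prop :=
  ∃ α : Monoid.Coprod G (FreeGroup ℕ) →* G, IsGHom α ∧
    (∀ W ∈ Ws, α (wordProd W) = 1) ∧
    ∀ x : ℕ, (∃ W ∈ Ws, x ∈ Vars W) → (QuotientGroup.mk' H) (xval α x) = γ x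

/-- A finitely supported `G`-automorphism of `G ∗ F_X`. -/
def IsFinGAut (φ : Monoid.Coprod G (FreeGroup ℕ) ≃* Monoid.Coprod G (FreeGroup ℕ)) : Prop :=
  (∀ g : G, φ (Monoid.Coprod.inl g) = Monoid.Coprod.inl g) ∧
  {x : ℕ | φ (Monoid.Coprod.inr (FreeGroup.of x)) ≠
      Monoid.Coprod.inr (FreeGroup.of x)}.Finite

/-- Two words are equivalent if some finitely supported `G`-automorphism sends (the
element of `G ∗ F_X` represented by) the first to a conjugate of the second. -/
def EquivWords (Wa Wb : Word G) : Prop :=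
  ∃ φ : Monoid.Coprod G (FreeGroup ℕ) ≃* Monoid.Coprod G (FreeGroup ℕ),
    IsFinGAut φ ∧ IsConj (φ (wordProd Wa)) (wordProd Wb)

/-- The homomorphism `G ∗ F_X → G/H` extending a constraint `γ` (equal to `π_H` on `G`
and to `γ` on the variables). -/
def constraintHom (H : Subgroup G) [H.Normal] (γ : ℕ → G ⧸ H) :
    Monoid.Coprod G (FreeGroup ℕ) →* G ⧸ H :=
  Monoid.Coprod.lift (QuotientGroup.mk' H) (FreeGroup.lift γ)

/-- Equivalence of constrained equations `(Wa = 1, γ)` and `(Wb = 1, ζ)`. -/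
def EquivWordsC (H : Subgroup G) [H.Normal] (Wa : Word G) (γ : ℕ → G ⧸ H)
    (Wb : Word G) (ζ : ℕ → G ⧸ H) : Prop :=
  ∃ φ : Monoid.Coprod G (FreeGroup ℕ) ≃* Monoid.Coprod G (FreeGroup ℕ),
    IsFinGAut φ ∧ IsConj (φ (wordProd Wa)) (wordProd Wb) ∧
    constraintHom H ζ = (constraintHom H γ).comp φ.toMonoidHom

/-- `W₁ #ₓ W₂`, for `W₁ = U₁ x^{ε₁} V₁` and `W₂ = U₂ x^{ε₂} V₂`:
the word `U₁ (V₂U₂)^{-ε₁ε₂} V₁`. -/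
def joinAt (U₁ V₁ U₂ V₂ : Word G) (e₁ e₂ : Bool) : Word G :=
  U₁ ++ (if e₁ = e₂ then wordInv (V₂ ++ U₂) else V₂ ++ U₂) ++ V₁



/-! ### The splitting map `Ψ` for words over `Γ` -/

/-- The image `St_Γ(1)/K` in `Γ/K` (well defined since `K ⊆ St_Γ(1)`). -/
def StQ : Subgroup (Grigorchuk ⧸ K) := St1.map (QuotientGroup.mk' K)

/-- The coset modulo `St_Γ(1)` of a letter, under the constraint `γ`
(`false` = trivial coset, `true` = nontrivial coset). -/
def letterBit (γ : ℕ → Grigorchuk ⧸ K) : Letter Grigorchuk → Bool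
  | Sum.inl g => if g ∈ St1 then false else true
  | Sum.inr (x, _) => if γ x ∈ StQ then false else true

/-- `σ_γ(W)`: the coset modulo `St_Γ(1)` of a word, under the constraint `γ`
(`false` = trivial coset `1`). -/
def sigmaW (γ : ℕ → Grigorchuk ⧸ K) : Word Grigorchuk → Bool
  | [] => false
  | u :: W => xor (letterBit γ u) (sigmaW γ W)

variable (d0 d1 : ℕ → ℕ)

/-- The descendant `x_j` of the variable `x` (given the two fixed injections). -/
def dsc (j : Bool) (x : ℕ) : ℕ := if j then d1 x else d0 x

/-- The letter of `Ψ_i(W)` replacing a letter of `W`, where `s` is the coset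
`σ_γ(u₁⋯u_{i-1})` of the preceding prefix. -/
def psiLetter (γ : ℕ → Grigorchuk ⧸ K) (i : Bool) (s : Bool) :
    Letter Grigorchuk → Letter Grigorchuk
  | Sum.inl g => Sum.inl (if s then psiG i (ga * bar g * ga) else psiG i (bar g))
  | Sum.inr (x, true) => Sum.inr (dsc d0 d1 (xor i s) x, true)
  | Sum.inr (x, false) =>
      Sum.inr (dsc d0 d1 (xor i (xor s (letterBit γ (Sum.inr (x, false))))) x, false)

/-- Auxiliary recursion for `Ψ_i`, carrying the coset of the processed prefix. -/
def psiGo (γ : ℕ → Grigorchuk ⧸ K) (i : Bool) : Bool → Word Grigorchuk → Word Grigorchuk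
  | _, [] => []
  | s, u :: W => psiLetter d0 d1 γ i s u :: psiGo γ i (xor s (letterBit γ u)) W

/-- The splitting `Ψ_i(W)` of a word `W` with respect to the constraint `γ`. -/
def PsiW (γ : ℕ → Grigorchuk ⧸ K) (i : Bool) (W : Word Grigorchuk) : Word Grigorchuk :=
  psiGo d0 d1 γ i false W

/-- `q̄` for `q ∈ Γ/K`: the closest element of `St_Γ(1)/K`. -/
def barQ (q : Grigorchuk ⧸ K) : Grigorchuk ⧸ K :=
  if q ∈ StQ then q else q * (QuotientGroup.mk' K ga)


end Grig

/-!
Let `ψ(K) ≤ Γ × Γ` be the subgroup of pairs of sections of elements of `K`. Conjugation by `a`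
swaps the two coordinates, so it suffices to show that `{k | (1, k) ∈ ψ(K)}` contains `K`. This
set is a subgroup, normal in `Γ` because `ψ₁` maps `St_Γ(1)` onto `Γ`, and it contains `abab`:
with `t = abab` one has `ψ(t) = (ca, ac)` and `ψ(ctc) = (a·ca·a, d·ac·d)`, so that
`ψ(t · ctc) = (1, acdacd) = (1, t)` since `cd = b`.
-/

namespace Grig

section Sections

variable {α : Type*} {i : α} {g g' k k' : Equiv.Perm (List α)}

/-- The relation `ψ_i(g) = k`, free of the choice made in `psiG`. -/
def HasSection (i : α) (g k : Equiv.Perm (List α)) : Prop :=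
  ∀ w, g (i :: w) = i :: k w

theorem HasSection.one (i : α) : HasSection i 1 1 := fun _ => rfl

theorem HasSection.mul (h : HasSection i g k) (h' : HasSection i g' k') :
    HasSection i (g * g') (k * k') := fun w => by
  rw [Equiv.Perm.mul_apply, h' w, h, Equiv.Perm.mul_apply]

theorem HasSection.inv (h : HasSection i g k) : HasSection i g⁻¹ k⁻¹ := fun w => by
  rw [Equiv.Perm.inv_eq_iff_eq, h, ← Equiv.Perm.mul_apply, mul_inv_cancel, Equiv.Perm.one_apply]

end Sections

theorem HasSection.conj_a {i : Bool} {g k : Equiv.Perm (List Bool)} (h : HasSection i g k) :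
    HasSection (!i) (a * g * a) k := fun w => by
  cases i <;> exact congrArg aFun (h w)

theorem hasSection_b_false : HasSection false b a := fun _ => rfl
theorem hasSection_b_true : HasSection true b c := fun _ => rfl
theorem hasSection_c_false : HasSection false c a := fun _ => rfl
theorem hasSection_c_true : HasSection true c d := fun _ => rfl
theorem hasSection_d_false : HasSection false d 1 := fun _ => rfl
theorem hasSection_d_true : HasSection true d b := fun _ => rfl

theorem stFun_klein (w : List Bool) :
    stFun .C (stFun .D w) = stFun .B w ∧ stFun .D (stFun .B w) = stFun .C w ∧
      stFun .B (stFun .C w) = stFun .D w := by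
  induction w with
  | nil => exact ⟨rfl, rfl, rfl⟩
  | cons x w ih =>
    cases x
    · exact ⟨rfl, rfl, congrArg (false :: ·) (aFun_invol w)⟩
    · exact ⟨congrArg (true :: ·) ih.2.1, congrArg (true :: ·) ih.2.2,
        congrArg (true :: ·) ih.1⟩

theorem a_mul_a : a * a = 1 := Equiv.ext aFun_invol

theorem c_mul_c : c * c = 1 := Equiv.ext (stFun_invol .C)

theorem c_mul_d : c * d = b := Equiv.ext fun w => (stFun_klein w).1

theorem hasSection_abab_mul_conj_c :
    HasSection false (a * b * a * b * (c * (a * b * a * b) * c)) 1 ∧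
      HasSection true (a * b * a * b * (c * (a * b * a * b) * c)) (a * b * a * b) := by
  have ht₀ : HasSection false (a * b * a * b) (c * a) :=
    hasSection_b_true.conj_a.mul hasSection_b_false
  have ht₁ : HasSection true (a * b * a * b) (a * c) :=
    hasSection_b_false.conj_a.mul hasSection_b_true
  have he₀ := ht₀.mul ((hasSection_c_false.mul ht₀).mul hasSection_c_false)
  have he₁ := ht₁.mul ((hasSection_c_true.mul ht₁).mul hasSection_c_true)
  constructor
  · convert he₀ using 1
    simp only [mul_assoc, a_mul_a, mul_one, ← mul_assoc a a, one_mul, c_mul_c]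
  · convert he₁ using 1
    simp only [mul_assoc, c_mul_d, ← mul_assoc c d]

theorem grigorchuk_le_stabilizer_nil :
    Grigorchuk ≤ MulAction.stabilizer (Equiv.Perm (List Bool)) ([] : List Bool) :=
  (Subgroup.closure_le _).mpr (by rintro _ (rfl | rfl | rfl | rfl) <;> rfl)

theorem mem_St1_of_hasSection {g k₀ k₁ : Grigorchuk} (h₀ : HasSection false g k₀)
    (h₁ : HasSection true g k₁) : g ∈ St1 := by
  have fix_nil (k : Grigorchuk) : (k : Equiv.Perm (List Bool)) [] = [] :=
    grigorchuk_le_stabilizer_nil k.2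
  exact ⟨by rw [h₀, fix_nil], by rw [h₁, fix_nil]⟩

theorem psiG_eq_of_hasSection {i : Bool} {g k : Grigorchuk} (h : HasSection i g k) :
    psiG i g = k := by
  have hex : ∃ k' : Grigorchuk, ∀ w : List Bool,
      (g : Equiv.Perm (List Bool)) (i :: w) = i :: (k' : Equiv.Perm (List Bool)) w := ⟨k, h⟩
  rw [psiG, dif_pos hex]
  exact Subtype.ext <| Equiv.ext fun w =>
    List.cons_injective ((hex.choose_spec w).symm.trans (h w))

theorem ga_inv : ga⁻¹ = ga := inv_eq_of_mul_eq_one_left (Subtype.ext a_mul_a)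

theorem gc_inv : gc⁻¹ = gc := inv_eq_of_mul_eq_one_left (Subtype.ext c_mul_c)

theorem exists_hasSection_true (g : Grigorchuk) :
    ∃ h u : Grigorchuk, HasSection false h u ∧ HasSection true h g := by
  obtain ⟨x, hx⟩ := g
  induction hx using Subgroup.closure_induction with
  | mem _ hy =>
    rcases hy with rfl | rfl | rfl | rfl
    · exact ⟨ga * gb * ga, gc, hasSection_b_true.conj_a, hasSection_b_false.conj_a⟩
    · exact ⟨gd, 1, hasSection_d_false, hasSection_d_true⟩
    · exact ⟨gb, ga, hasSection_b_false, hasSection_b_true⟩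
    · exact ⟨gc, ga, hasSection_c_false, hasSection_c_true⟩
  | one => exact ⟨1, 1, .one _, .one _⟩
  | mul _ _ _ _ hy hz =>
    obtain ⟨h, u, h₀, h₁⟩ := hy
    obtain ⟨h', u', h₀', h₁'⟩ := hz
    exact ⟨h * h', u * u', h₀.mul h₀', h₁.mul h₁'⟩
  | inv _ _ hy =>
    obtain ⟨h, u, h₀, h₁⟩ := hy
    exact ⟨h⁻¹, u⁻¹, h₀.inv, h₁.inv⟩

def psiK : Subgroup (Grigorchuk × Grigorchuk) where
  carrier := {p | ∃ g ∈ K, HasSection false g p.1 ∧ HasSection true g p.2}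
  one_mem' := ⟨1, K.one_mem, .one _, .one _⟩
  mul_mem' := by
    rintro p q ⟨g, hg, hp₀, hp₁⟩ ⟨g', hg', hq₀, hq₁⟩
    exact ⟨g * g', K.mul_mem hg hg', hp₀.mul hq₀, hp₁.mul hq₁⟩
  inv_mem' := by
    rintro p ⟨g, hg, hp₀, hp₁⟩
    exact ⟨g⁻¹, K.inv_mem hg, hp₀.inv, hp₁.inv⟩

theorem swap_mem_psiK {k₀ k₁ : Grigorchuk} (h : (k₀, k₁) ∈ psiK) : (k₁, k₀) ∈ psiK := by
  obtain ⟨g, hg, h₀, h₁⟩ := h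
  have hconj : ga * g * ga ∈ K := by
    simpa [ga_inv] using Subgroup.Normal.conj_mem inferInstance g hg ga
  exact ⟨ga * g * ga, hconj, h₁.conj_a, h₀.conj_a⟩

def psiKRight : Subgroup Grigorchuk := psiK.comap (MonoidHom.inr Grigorchuk Grigorchuk)

instance : psiKRight.Normal where
  conj_mem n hn u := by
    obtain ⟨h, u₀, hs₀, hs₁⟩ := exists_hasSection_true u
    obtain ⟨g, hg, h₀, h₁⟩ := hn
    refine ⟨h * g * h⁻¹, Subgroup.Normal.conj_mem inferInstance g hg h, ?_,
      (hs₁.mul h₁).mul hs₁.inv⟩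
    simpa using (hs₀.mul h₀).mul hs₀.inv

theorem K_le_psiKRight : K ≤ psiKRight := by
  refine Subgroup.normalClosure_le_normal (Set.singleton_subset_iff.mpr ?_)
  have ht : ga * gb * ga * gb ∈ K := Subgroup.subset_normalClosure rfl
  have hct : gc * (ga * gb * ga * gb) * gc ∈ K := by
    simpa [gc_inv] using Subgroup.Normal.conj_mem inferInstance _ ht gc
  exact ⟨_, K.mul_mem ht hct, hasSection_abab_mul_conj_c⟩

end Grig

/-- **Lemma (K × K ⊆ ψ(K)).** For every pair `(k₀, k₁) ∈ K × K` there exists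
`g ∈ K ∩ St_Γ(1)` with `ψ(g) = (k₀, k₁)`. -/
theorem Grig.K_times_K_subset_psi_K (k0 k1 : Grigorchuk) (hk0 : k0 ∈ K) (hk1 : k1 ∈ K) :
    ∃ g : Grigorchuk, g ∈ K ∧ g ∈ St1 ∧ psiG false g = k0 ∧ psiG true g = k1 := by
  obtain ⟨g, hg, h₀, h₁⟩ : (k0, k1) ∈ psiK := by
    simpa using psiK.mul_mem (swap_mem_psiK (K_le_psiKRight hk0)) (K_le_psiKRight hk1)
  exact ⟨g, hg, mem_St1_of_hasSection h₀ h₁, psiG_eq_of_hasSection h₀, psiG_eq_of_hasSection h₁⟩
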